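/- arXiv:0909.1537 — 10 statements merged into one kernel-verified Lean document; each statement's English description precedes it below -/
import Mathlib

section
/- Let A₁, A₂, S, Π₁, Π₂ satisfy the S-node identity A₁ S − S A₂ = Π₁ Π₂* with S invertible. For λ not in the spectrum of A₁ nor of A₂, the transfer matrix function w(λ) = I_m − Π₂* S⁻¹ (A₁ − λ I_n)⁻¹ Π₁ is invertible with inverse w(λ)⁻¹ = I_m + Π₂* (A₂ − λ I_n)⁻¹ S⁻¹ Π₁. -/
open Matrix

/-- Inversion formula for the transfer matrix function of an S-node:
if A₁ S − S A₂ = Π₁ Π₂*, S invertible, λ ∉ σ(A₁) ∪ σ(A₂), then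
(I − Π₂* S⁻¹ (A₁ − λI)⁻¹ Π₁)⁻¹ = I + Π₂* (A₂ − λI)⁻¹ S⁻¹ Π₁. -/
theorem stmt_1 {n m : ℕ} (A₁ A₂ S : Matrix (Fin n) (Fin n) ℂ)
    (B₁ B₂ : Matrix (Fin n) (Fin m) ℂ) (lam : ℂ)
    (hS : IsUnit S.det)
    (h₁ : IsUnit (A₁ - lam • (1 : Matrix (Fin n) (Fin n) ℂ)).det)
    (h₂ : IsUnit (A₂ - lam • (1 : Matrix (Fin n) (Fin n) ℂ)).det)
    (hid : A₁ * S - S * A₂ = B₁ * B₂ᴴ) :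
    ((1 : Matrix (Fin m) (Fin m) ℂ)
        - B₂ᴴ * S⁻¹ * (A₁ - lam • (1 : Matrix (Fin n) (Fin n) ℂ))⁻¹ * B₁)
      * ((1 : Matrix (Fin m) (Fin m) ℂ)
        + B₂ᴴ * (A₂ - lam • (1 : Matrix (Fin n) (Fin n) ℂ))⁻¹ * S⁻¹ * B₁) = 1
    ∧ ((1 : Matrix (Fin m) (Fin m) ℂ)
        + B₂ᴴ * (A₂ - lam • (1 : Matrix (Fin n) (Fin n) ℂ))⁻¹ * S⁻¹ * B₁)
      * ((1 : Matrix (Fin m) (Fin m) ℂ)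
        - B₂ᴴ * S⁻¹ * (A₁ - lam • (1 : Matrix (Fin n) (Fin n) ℂ))⁻¹ * B₁) = 1 := by
  set M₁ : Matrix (Fin n) (Fin n) ℂ := A₁ - lam • (1 : Matrix (Fin n) (Fin n) ℂ) with hM₁def
  set M₂ : Matrix (Fin n) (Fin n) ℂ := A₂ - lam • (1 : Matrix (Fin n) (Fin n) ℂ) with hM₂def
  have hS1 : S * S⁻¹ = 1 := mul_nonsing_inv S hS
  have hS2 : S⁻¹ * S = 1 := nonsing_inv_mul S hS
  have hM₁1 : M₁ * M₁⁻¹ = 1 := mul_nonsing_inv M₁ h₁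
  have hM₁2 : M₁⁻¹ * M₁ = 1 := nonsing_inv_mul M₁ h₁
  have hM₂1 : M₂ * M₂⁻¹ = 1 := mul_nonsing_inv M₂ h₂
  have hM₂2 : M₂⁻¹ * M₂ = 1 := nonsing_inv_mul M₂ h₂
  have hkey : M₁ * S - S * M₂ = B₁ * B₂ᴴ := by
    rw [hM₁def, hM₂def, sub_mul, mul_sub, smul_mul_assoc, mul_smul_comm, one_mul, mul_one,
      ← hid]
    abel
  have L1 : ∀ X : Matrix (Fin n) (Fin m) ℂ,
      B₁ * (B₂ᴴ * X) = M₁ * (S * X) - S * (M₂ * X) := by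
    intro X
    rw [← Matrix.mul_assoc, ← hkey, Matrix.sub_mul, Matrix.mul_assoc, Matrix.mul_assoc]
  have L2 : ∀ X : Matrix (Fin n) (Fin m) ℂ, M₁⁻¹ * (M₁ * X) = X := by
    intro X; rw [← Matrix.mul_assoc, hM₁2, Matrix.one_mul]
  have L3 : ∀ X : Matrix (Fin n) (Fin m) ℂ, S⁻¹ * (S * X) = X := by
    intro X; rw [← Matrix.mul_assoc, hS2, Matrix.one_mul]
  have L4 : ∀ X : Matrix (Fin n) (Fin m) ℂ, M₂ * (M₂⁻¹ * X) = X := by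
    intro X; rw [← Matrix.mul_assoc, hM₂1, Matrix.one_mul]
  have L5 : ∀ X : Matrix (Fin n) (Fin m) ℂ, S * (S⁻¹ * X) = X := by
    intro X; rw [← Matrix.mul_assoc, hS1, Matrix.one_mul]
  have L6 : ∀ X : Matrix (Fin n) (Fin m) ℂ, M₂⁻¹ * (M₂ * X) = X := by
    intro X; rw [← Matrix.mul_assoc, hM₂2, Matrix.one_mul]
  have L7 : ∀ X : Matrix (Fin n) (Fin m) ℂ, M₁ * (M₁⁻¹ * X) = X := by
    intro X; rw [← Matrix.mul_assoc, hM₁1, Matrix.one_mul]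
  set a : Matrix (Fin m) (Fin m) ℂ := B₂ᴴ * S⁻¹ * M₁⁻¹ * B₁ with hadef
  set b : Matrix (Fin m) (Fin m) ℂ := B₂ᴴ * M₂⁻¹ * S⁻¹ * B₁ with hbdef
  have hab : a * b = b - a := by
    simp only [hadef, hbdef, Matrix.mul_assoc, L1, Matrix.mul_sub, L2, L3, L4, L5, L6, L7]
  have hba : b * a = b - a := by
    simp only [hadef, hbdef, Matrix.mul_assoc, L1, Matrix.mul_sub, L2, L3, L4, L5, L6, L7]
  constructor
  · show (1 - a) * (1 + b) = 1
    rw [sub_mul, mul_add, mul_add, one_mul, one_mul, mul_one, hab]; abel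
  · show (1 + b) * (1 - a) = 1
    rw [add_mul, mul_sub, mul_sub, one_mul, one_mul, mul_one, hba]; abel
end

section
/- Let A = diag{a₁,…,a_n} with distinct a_k all in the open upper half-plane, let Π be an n×m matrix whose rows ψ₁,…,ψ_n are all nonzero, and suppose S = S* satisfies A S − S A* = i Π Π*. Then S is positive definite. -/
/-!
Solving the identity entrywise gives `S j k = I * (Π Π*) j k / (a j - conj (a k))`. The Cayley
transform `w = (a - I) / (a + I)` moves the `a k` into the unit disc and rewrites this as
`S = 2 D ((Π Π*) ⊙ K) D*`, with `D = diag (a k + I)⁻¹` and `K` the Szegő kernel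
`(1 - w j * conj (w k))⁻¹`. Expanding `K` as a geometric series,
`x* ((Π Π*) ⊙ K) x = ∑ p, ∑ l, |∑ j, conj (x j) * Π j l * w j ^ p|²` is a sum of squares, and all
its terms vanish only if every `conj (x j) * Π j l` does, because the Vandermonde matrix of the
distinct `w j` is invertible.
-/

open Matrix
open scoped ComplexOrder

open Complex ComplexConjugate

noncomputable def cayley (z : ℂ) : ℂ := (z - I) / (z + I)

lemma add_I_ne_zero_of_im_pos {z : ℂ} (hz : 0 < z.im) : z + I ≠ 0 := by
  intro h
  have := congrArg im h
  simp only [add_im, I_im, zero_im] at this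
  linarith

lemma norm_cayley_lt_one {z : ℂ} (hz : 0 < z.im) : ‖cayley z‖ < 1 := by
  rw [cayley, norm_div, div_lt_one (norm_pos_iff.2 (add_I_ne_zero_of_im_pos hz)),
    ← sq_lt_sq₀ (norm_nonneg _) (norm_nonneg _), Complex.sq_norm, Complex.sq_norm]
  simp only [normSq_apply, sub_re, sub_im, add_re, add_im, I_re, I_im]
  nlinarith

lemma cayley_injOn : Set.InjOn cayley {z | z + I ≠ 0} := by
  intro z hz w hw h
  rw [cayley, cayley, div_eq_div_iff hz hw] at h
  have : 2 * I * (z - w) = 0 := by linear_combination h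
  simpa [I_ne_zero, sub_eq_zero] using this

lemma one_sub_cayley_mul_conj_cayley {z w : ℂ} (hz : z + I ≠ 0) (hw : w + I ≠ 0) :
    (1 - cayley z * conj (cayley w)) * ((z + I) * conj (w + I)) = -2 * I * (z - conj w) := by
  have hw' : conj (w + I) ≠ 0 := (map_ne_zero _).2 hw
  rw [cayley, cayley, map_div₀, sub_mul, one_mul, div_mul_div_comm, div_mul_eq_mul_div,
    div_eq_of_eq_mul (mul_ne_zero hz hw') rfl]
  simp only [map_sub, map_add, conj_I]
  ring

lemma I_div_sub_conj {z w : ℂ} (hz : z + I ≠ 0) (hw : w + I ≠ 0) :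
    I / (z - conj w) =
      2 * ((z + I)⁻¹ * (1 - cayley z * conj (cayley w))⁻¹ * conj (w + I)⁻¹) := by
  calc I / (z - conj w) = 2 * (-2 * I * (z - conj w))⁻¹ := by
        simp only [mul_inv, inv_I, div_eq_mul_inv]
        ring
    _ = 2 * ((z + I)⁻¹ * (1 - cayley z * conj (cayley w))⁻¹ * conj (w + I)⁻¹) := by
        rw [← one_sub_cayley_mul_conj_cayley hz hw, mul_inv, mul_inv, map_inv₀]
        ring

noncomputable def szegoKernel {ι : Type*} (w : ι → ℂ) : Matrix ι ι ℂ :=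
  of fun j k => (1 - w j * conj (w k))⁻¹

lemma isHermitian_szegoKernel {ι : Type*} (w : ι → ℂ) : (szegoKernel w).IsHermitian := by
  ext j k
  simp [szegoKernel, mul_comm]

lemma hasSum_dotProduct_mulVec_hadamard_szegoKernel {ι κ : Type*} [Fintype ι] [Fintype κ]
    {w : ι → ℂ} (hw : ∀ j, ‖w j‖ < 1) (V : Matrix ι κ ℂ) (x : ι → ℂ) :
    HasSum (fun p : ℕ => ∑ l, (normSq (∑ j, star (x j) * V j l * w j ^ p) : ℂ))
      (star x ⬝ᵥ (((V * Vᴴ) ⊙ szegoKernel w) *ᵥ x)) := by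
  have hgeom : ∀ j k,
      HasSum (fun p : ℕ => star (x j) * (V * Vᴴ) j k * x k * (w j * conj (w k)) ^ p)
        (star (x j) * (V * Vᴴ) j k * x k * (1 - w j * conj (w k))⁻¹) := by
    intro j k
    have hjk : ‖w j * conj (w k)‖ < 1 := by
      rw [norm_mul, Complex.norm_conj]
      exact mul_lt_one_of_nonneg_of_lt_one_left (norm_nonneg _) (hw j) (hw k).le
    exact (hasSum_geometric_of_norm_lt_one hjk).mul_left _
  have hsum := hasSum_sum (s := Finset.univ) fun j _ =>
    hasSum_sum (s := Finset.univ) fun k _ => hgeom j k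
  convert hsum using 1
  · funext p
    simp only [← mul_conj, map_sum, mul_apply, conjTranspose_apply,
      Finset.mul_sum, Finset.sum_mul]
    rw [Finset.sum_comm, Finset.sum_congr rfl fun _ _ => Finset.sum_comm, Finset.sum_comm]
    refine Finset.sum_congr rfl fun i _ => ?_
    refine Finset.sum_congr rfl fun j _ => Finset.sum_congr rfl fun l _ => ?_
    simp only [map_mul, map_pow, RCLike.star_def, Complex.conj_conj]
    ring
  · simp only [dotProduct, mulVec, hadamard_apply, szegoKernel, of_apply, Finset.mul_sum]
    refine Finset.sum_congr rfl fun j _ => Finset.sum_congr rfl fun k _ => ?_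
    simp only [Pi.star_apply]
    ring

lemma exists_sum_mul_pow_ne_zero {R : Type*} [CommRing R] [IsDomain R] {n : ℕ} {w : Fin n → R}
    (hw : Function.Injective w) {c : Fin n → R} (hc : c ≠ 0) : ∃ p : ℕ, ∑ j, c j * w j ^ p ≠ 0 := by
  by_contra! h
  refine hc (eq_zero_of_vecMul_eq_zero (det_vandermonde_ne_zero_iff.2 hw) (funext fun p => ?_))
  simpa [vecMul, dotProduct, vandermonde_apply] using h p

theorem posDef_mul_conjTranspose_hadamard_szegoKernel {n : ℕ} {κ : Type*} [Fintype κ]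
    {w : Fin n → ℂ} (hw : ∀ j, ‖w j‖ < 1) (hinj : Function.Injective w)
    {V : Matrix (Fin n) κ ℂ} (hV : ∀ j, V j ≠ 0) : ((V * Vᴴ) ⊙ szegoKernel w).PosDef := by
  refine .of_dotProduct_mulVec_pos
    ((isHermitian_mul_conjTranspose_self V).hadamard (isHermitian_szegoKernel w)) fun x hx => ?_
  obtain ⟨j, hj⟩ := Function.ne_iff.1 hx
  obtain ⟨l, hl⟩ := Function.ne_iff.1 (hV j)
  obtain ⟨p, hp⟩ := exists_sum_mul_pow_ne_zero hinj (c := fun j => star (x j) * V j l)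
    (Function.ne_iff.2 ⟨j, by simpa using ⟨hj, hl⟩⟩)
  have hnonneg : ∀ (q : ℕ) (l : κ), 0 ≤ (normSq (∑ j, star (x j) * V j l * w j ^ q) : ℂ) :=
    fun _ _ => zero_le_real.2 (normSq_nonneg _)
  refine hasSum_lt (f := 0) (i := p) (fun q => Finset.sum_nonneg fun l _ => hnonneg q l) ?_
    hasSum_zero (hasSum_dotProduct_mulVec_hadamard_szegoKernel hw V x)
  exact Finset.sum_pos' (fun l _ => hnonneg p l)
    ⟨l, Finset.mem_univ _, zero_lt_real.2 (normSq_pos.2 hp)⟩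

theorem stmt_3_general {n m : ℕ} (a : Fin n → ℂ) (S : Matrix (Fin n) (Fin n) ℂ)
    (B : Matrix (Fin n) (Fin m) ℂ)
    (ha : Function.Injective a)
    (hup : ∀ k, 0 < (a k).im)
    (hrow : ∀ k, B k ≠ 0)
    (hid : Matrix.diagonal a * S - S * (Matrix.diagonal a)ᴴ = Complex.I • (B * Bᴴ)) :
    S.PosDef := by
  have hI : ∀ k, a k + I ≠ 0 := fun k => add_I_ne_zero_of_im_pos (hup k)
  set c : Fin n → ℂ := fun k => (a k + I)⁻¹
  have hS :
      S = (2 : ℂ) • (diagonal c * ((B * Bᴴ) ⊙ szegoKernel (cayley ∘ a)) * (diagonal c)ᴴ) := by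
    ext j k
    have hjk : (a j - conj (a k)) * S j k = I * (B * Bᴴ) j k := by
      simpa [sub_mul, mul_comm (S j k)] using congrFun₂ hid j k
    have hne : a j - conj (a k) ≠ 0 := fun h => by
      have := congrArg im h
      simp only [sub_im, conj_im, zero_im] at this
      linarith [hup j, hup k]
    rw [eq_div_of_mul_eq hne ((mul_comm _ _).trans hjk), mul_div_right_comm,
      I_div_sub_conj (hI j) (hI k)]
    simp only [Matrix.smul_apply, smul_eq_mul, mul_diagonal, diagonal_mul, diagonal_conjTranspose,
      hadamard_apply, szegoKernel, of_apply, Function.comp_apply, Pi.star_apply, RCLike.star_def, c]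
    ring
  rw [hS]
  refine (PosDef.mul_mul_conjTranspose_same ?_ ?_).smul two_pos
  · exact posDef_mul_conjTranspose_hadamard_szegoKernel (fun k => norm_cayley_lt_one (hup k))
      (fun j k h => ha (cayley_injOn (hI j) (hI k) h)) hrow
  · intro u v h
    funext j
    simpa [c, vecMul_diagonal, hI] using congrFun h j

/-- If A = diag{a₁,…,aₙ} with distinct aₖ in the open upper half-plane, the rows of Π
are nonzero, S = S* and A S − S A* = i Π Π*, then S > 0. -/
theorem stmt_3 {n m : ℕ} (a : Fin n → ℂ) (S : Matrix (Fin n) (Fin n) ℂ)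
    (B : Matrix (Fin n) (Fin m) ℂ)
    (ha : Function.Injective a)
    (hup : ∀ k, 0 < (a k).im)
    (hrow : ∀ k, B k ≠ 0)
    (hS : S.IsHermitian)
    (hid : Matrix.diagonal a * S - S * (Matrix.diagonal a)ᴴ = Complex.I • (B * Bᴴ)) :
    S.PosDef :=
  stmt_3_general a S B ha hup hrow hid
end

section
/- If S = S* satisfies A S − S A* = i Π Π* and S g = 0 for a vector g, then Π* g = 0 and S A* g = 0; by induction, S (A*)^k g = 0 and Π* (A*)^k g = 0 for all k ≥ 0. -/
open Matrix
open scoped ComplexOrder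

lemma step_4 {n m : ℕ} (A S : Matrix (Fin n) (Fin n) ℂ)
    (B : Matrix (Fin n) (Fin m) ℂ) (v : Fin n → ℂ)
    (hH : S.IsHermitian)
    (hid : A * S - S * Aᴴ = Complex.I • (B * Bᴴ))
    (hv : S *ᵥ v = 0) :
    Bᴴ *ᵥ v = 0 ∧ S *ᵥ (Aᴴ *ᵥ v) = 0 := by
  have hvS : star v ᵥ* S = 0 := by
    have := congrArg star hv
    rw [star_mulVec, hH.eq] at this
    simpa using this
  have hq : star v ⬝ᵥ ((A * S - S * Aᴴ) *ᵥ v) = 0 := by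
    rw [sub_mulVec, dotProduct_sub, ← mulVec_mulVec, ← mulVec_mulVec, hv,
      mulVec_zero, dotProduct_zero, dotProduct_mulVec, hvS,
      zero_dotProduct, sub_zero]
  rw [hid, smul_mulVec, dotProduct_smul] at hq
  have hBB : star v ⬝ᵥ ((B * Bᴴ) *ᵥ v) = 0 := by
    have := smul_eq_zero.mp hq
    rcases this with h | h
    · exact absurd h Complex.I_ne_zero
    · exact h
  have hB : Bᴴ *ᵥ v = 0 := by
    have h1 : star (Bᴴ *ᵥ v) ⬝ᵥ (Bᴴ *ᵥ v) = 0 := by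
      rw [star_mulVec, conjTranspose_conjTranspose, ← dotProduct_mulVec,
        mulVec_mulVec] at *
      exact hBB
    exact (dotProduct_star_self_eq_zero).mp h1
  refine ⟨hB, ?_⟩
  have : S *ᵥ (Aᴴ *ᵥ v) = A *ᵥ (S *ᵥ v) - Complex.I • ((B * Bᴴ) *ᵥ v) := by
    have := congrArg (· *ᵥ v) hid
    simp only [sub_mulVec, smul_mulVec] at this
    rw [← mulVec_mulVec, ← mulVec_mulVec] at this
    linear_combination (norm := module) -this
  rw [this, hv, mulVec_zero, ← mulVec_mulVec, hB, mulVec_zero, smul_zero,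
    sub_zero]

/-- If S = S* ≥ 0 satisfies A S − S A* = i Π Π* and S g = 0, then
S (A*)^k g = 0 and Π* (A*)^k g = 0 for all k ≥ 0. -/
theorem stmt_4 {n m : ℕ} (A S : Matrix (Fin n) (Fin n) ℂ)
    (B : Matrix (Fin n) (Fin m) ℂ) (g : Fin n → ℂ)
    (hS : S.PosSemidef)
    (hid : A * S - S * Aᴴ = Complex.I • (B * Bᴴ))
    (hg : S *ᵥ g = 0) :
    ∀ k : ℕ, S *ᵥ ((Aᴴ ^ k) *ᵥ g) = 0 ∧ Bᴴ *ᵥ ((Aᴴ ^ k) *ᵥ g) = 0 := by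
  intro k
  induction k with
  | zero =>
    simp only [pow_zero, one_mulVec]
    exact ⟨hg, (step_4 A S B g hS.1 hid hg).1⟩
  | succ k ih =>
    have h := step_4 A S B ((Aᴴ ^ k) *ᵥ g) hS.1 hid ih.1
    have hpow : (Aᴴ ^ (k + 1)) *ᵥ g = Aᴴ *ᵥ ((Aᴴ ^ k) *ᵥ g) := by
      rw [mulVec_mulVec, ← pow_succ']
    rw [hpow]
    exact ⟨h.2, (step_4 A S B (Aᴴ *ᵥ ((Aᴴ ^ k) *ᵥ g)) hS.1 hid h.2).1⟩
end

section
/- Under the hypotheses of the block S-node (A lower block triangular with blocks A₁₁, A₂₁, A₂₂; S, Π satisfying A S − S A* = Π J̆ Π*, with S and S₁₁ invertible), the transfer matrix w_A(λ) = I₂ − J̆ Π* S⁻¹ (A − λI)⁻¹ Π factors as w_A(λ) = w₂(λ) w₁(λ), where w₁(λ) = I₂ − J̆ Π* P₁* S₁₁⁻¹ (A₁₁ − λI)⁻¹ P₁ Π and w₂(λ) = I₂ − J̆ Π* S⁻¹ P₂* (A₂₂ − λI)⁻¹ T₂₂⁻¹ P₂ S⁻¹ Π, with T₂₂ the lower-right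 block of S⁻¹ and P₁ = [I, 0], P₂ = [0, I]. -/
/-!
Block Gaussian elimination. With `L = S₂₁ S₁₁⁻¹` and the shear `X = [[I, 0], [-L, I]]`, the
change of coordinates `A ↦ X A X⁻¹`, `S ↦ X S`, `Π ↦ X Π` leaves the transfer function
unchanged, keeps `A` block lower triangular and makes `S` block upper triangular, with
lower-right block the Schur complement `S₂₂ - L S₁₂ = T₂₂⁻¹`. In the new coordinates the
`(2,1)` block of `A S - S A* = Π J Π*` says that the new off-diagonal block of `A` is
`Π₂' J Π₁* S₁₁⁻¹`, i.e. the node is the cascade of the nodes on the two diagonal blocks, and the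
transfer function of a cascade is the product of the transfer functions.
-/

open Matrix

namespace Matrix

variable {R : Type*} [CommRing R] {l m n : Type*}

lemma fromBlocks_sub (A A' : Matrix m m R) (B B' : Matrix m n R) (C C' : Matrix n m R)
    (D D' : Matrix n n R) :
    fromBlocks A B C D - fromBlocks A' B' C' D'
      = fromBlocks (A - A') (B - B') (C - C') (D - D') := by
  ext (i | i) (j | j) <;> rfl

lemma fromBlocks_sub_smul_one [DecidableEq m] [DecidableEq n] (A : Matrix m m R)
    (B : Matrix m n R) (C : Matrix n m R) (D : Matrix n n R) (c : R) :
    fromBlocks A B C D - c • 1 = fromBlocks (A - c • 1) B C (D - c • 1) := by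
  rw [← fromBlocks_one, fromBlocks_smul, fromBlocks_sub]
  simp

variable [Fintype l] [Fintype m] [Fintype n]

section Similarity

variable {o : Type*} [Fintype o] [DecidableEq o]

omit [Fintype l] in
lemma mul_mul_inv_mul_eq_of_mul_eq_one {X Y : Matrix o o R} (h : X * Y = 1) (C : Matrix l o R)
    (V E : Matrix o o R) (B : Matrix o l R) :
    C * (V * X) * E⁻¹ * B = C * V * (X * E * Y)⁻¹ * (X * B) := by
  rw [Matrix.mul_inv_rev, Matrix.mul_inv_rev, inv_eq_right_inv h, inv_eq_left_inv h]
  simp only [Matrix.mul_assoc, ← Matrix.mul_assoc Y X, mul_eq_one_comm.mp h, Matrix.one_mul]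

lemma conj_sub_smul_one {X Y : Matrix o o R} (h : X * Y = 1) (A : Matrix o o R) (c : R) :
    X * (A - c • 1) * Y = X * A * Y - c • 1 := by
  rw [Matrix.mul_sub, Matrix.sub_mul, Matrix.mul_smul, Matrix.mul_one, Matrix.smul_mul, h]

lemma conj_mul_sub_mul_eq {X Y A S N : Matrix o o R} {B : Matrix o l R} {G : Matrix l o R}
    (hYX : Y * X = 1) (h : A * S - S * N = B * G) :
    X * A * Y * (X * S) - X * S * N = X * B * G := by
  have hXAS : X * A * Y * (X * S) = X * (A * S) := by
    simp only [Matrix.mul_assoc, ← Matrix.mul_assoc Y X, hYX, Matrix.one_mul]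
  rw [hXAS, Matrix.mul_assoc X S, ← Matrix.mul_sub, h, Matrix.mul_assoc]

end Similarity

variable [DecidableEq m] [DecidableEq n]

section Shear

variable (L : Matrix n m R)

lemma fromBlocks_shear_mul_shear_neg :
    fromBlocks 1 0 L 1 * fromBlocks 1 0 (-L) 1 = (1 : Matrix (m ⊕ n) (m ⊕ n) R) := by
  simp [fromBlocks_multiply]

lemma fromBlocks_shear_neg_mul_shear :
    fromBlocks 1 0 (-L) 1 * fromBlocks 1 0 L 1 = (1 : Matrix (m ⊕ n) (m ⊕ n) R) := by
  simpa using fromBlocks_shear_mul_shear_neg (-L)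

lemma fromBlocks_shear_conj (A₁₁ : Matrix m m R) (A₂₁ : Matrix n m R) (A₂₂ : Matrix n n R) :
    fromBlocks 1 0 (-L) 1 * fromBlocks A₁₁ 0 A₂₁ A₂₂ * fromBlocks 1 0 L 1
      = fromBlocks A₁₁ 0 (A₂₁ + A₂₂ * L - L * A₁₁) A₂₂ := by
  simp only [fromBlocks_multiply, Matrix.one_mul, Matrix.mul_one, Matrix.zero_mul,
    Matrix.mul_zero, Matrix.neg_mul, add_zero, zero_add]
  congr 1
  abel

omit [Fintype l] in
lemma fromBlocks_shear_neg_mul_fromRows (B₁ : Matrix m l R) (B₂ : Matrix n l R) :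
    (fromBlocks 1 0 (-L) 1 : Matrix (m ⊕ n) (m ⊕ n) R) * fromRows B₁ B₂
      = fromRows B₁ (B₂ - L * B₁) := by
  simp [fromBlocks_mul_fromRows, sub_eq_add_neg, add_comm]

variable {L} {A : Matrix m m R} {B : Matrix m n R} {C : Matrix n m R} {D : Matrix n n R}

lemma fromBlocks_shear_neg_mul_of_mul_eq (h : L * A = C) :
    fromBlocks 1 0 (-L) 1 * fromBlocks A B C D = fromBlocks A B 0 (D - L * B) := by
  simp [fromBlocks_multiply, h, sub_eq_add_neg, add_comm]

lemma fromBlocks_eq_shear_mul_of_mul_eq (h : L * A = C) :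
    fromBlocks A B C D = fromBlocks 1 0 L 1 * fromBlocks A B 0 (D - L * B) := by
  rw [← fromBlocks_shear_neg_mul_of_mul_eq h, ← Matrix.mul_assoc,
    fromBlocks_shear_mul_shear_neg, Matrix.one_mul]

lemma isUnit_det_sub_mul_of_mul_eq (h : L * A = C) (hS : IsUnit (fromBlocks A B C D).det) :
    IsUnit (D - L * B).det := by
  rw [fromBlocks_eq_shear_mul_of_mul_eq h, det_mul, det_fromBlocks_zero₁₂,
    det_fromBlocks_zero₂₁] at hS
  simp only [det_one, one_mul] at hS
  exact isUnit_of_mul_isUnit_right hS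

lemma inv_fromBlocks_eq_of_mul_eq (h : L * A = C) (hA : IsUnit A.det)
    (hS : IsUnit (fromBlocks A B C D).det) :
    (fromBlocks A B C D)⁻¹
      = fromBlocks A⁻¹ (-(A⁻¹ * B * (D - L * B)⁻¹)) 0 (D - L * B)⁻¹ * fromBlocks 1 0 (-L) 1 := by
  rw [fromBlocks_eq_shear_mul_of_mul_eq h, Matrix.mul_inv_rev,
    inv_eq_right_inv (fromBlocks_shear_mul_shear_neg L), inv_fromBlocks_zero₂₁_of_isUnit_iff]
  simp only [isUnit_iff_isUnit_det, hA, isUnit_det_sub_mul_of_mul_eq h hS]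

lemma shear_conj₂₁_eq_of_mul_sub_mul_eq {A₁₁ N₁₁ : Matrix m m R} {A₂₁ : Matrix n m R}
    {A₂₂ N₂₂ : Matrix n n R} {N₁₂ : Matrix m n R} {B₁ : Matrix m l R} {B₂ : Matrix n l R}
    {G₁ : Matrix l m R} {G₂ : Matrix l n R} (hL : L * A = C) (hA : IsUnit A.det)
    (h : fromBlocks A₁₁ 0 A₂₁ A₂₂ * fromBlocks A B C D
        - fromBlocks A B C D * fromBlocks N₁₁ N₁₂ 0 N₂₂ = fromRows B₁ B₂ * fromCols G₁ G₂) :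
    A₂₁ + A₂₂ * L - L * A₁₁ = (B₂ - L * B₁) * (G₁ * A⁻¹) := by
  have h' := conj_mul_sub_mul_eq (fromBlocks_shear_mul_shear_neg L) h
  rw [fromBlocks_shear_conj, fromBlocks_shear_neg_mul_of_mul_eq hL,
    fromBlocks_shear_neg_mul_fromRows] at h'
  have h₂₁ := congrArg toBlocks₂₁ h'
  simp only [fromBlocks_multiply, fromBlocks_sub, fromRows_mul_fromCols, toBlocks_fromBlocks₂₁,
    Matrix.mul_zero, Matrix.zero_mul, add_zero, sub_zero] at h₂₁
  rw [← Matrix.mul_assoc, ← h₂₁, mul_nonsing_inv_cancel_right _ _ hA]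

end Shear

lemma one_sub_fromCols_mul_inv_fromBlocks_mul_fromRows [DecidableEq l] {E₁ : Matrix m m R}
    {E₂ : Matrix n n R} (hE : IsUnit E₁ ↔ IsUnit E₂) (C₁ : Matrix l m R) (C₂ : Matrix l n R)
    (B₁ : Matrix m l R) (B₂ : Matrix n l R) :
    1 - fromCols C₁ C₂ * (fromBlocks E₁ 0 (B₂ * C₁) E₂)⁻¹ * fromRows B₁ B₂
      = (1 - C₂ * E₂⁻¹ * B₂) * (1 - C₁ * E₁⁻¹ * B₁) := by
  rw [inv_fromBlocks_zero₁₂_of_isUnit_iff _ _ _ hE, fromCols_mul_fromBlocks,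
    fromCols_mul_fromRows]
  simp only [Matrix.mul_zero, Matrix.zero_mul, Matrix.mul_sub, Matrix.sub_mul, Matrix.mul_one,
    Matrix.one_mul, Matrix.mul_neg, Matrix.neg_mul, Matrix.add_mul, Matrix.mul_assoc]
  abel

end Matrix

theorem stmt_7_general {n₁ n₂ : ℕ}
    (A₁₁ : Matrix (Fin n₁) (Fin n₁) ℂ) (A₂₁ : Matrix (Fin n₂) (Fin n₁) ℂ)
    (A₂₂ : Matrix (Fin n₂) (Fin n₂) ℂ)
    (S : Matrix (Fin n₁ ⊕ Fin n₂) (Fin n₁ ⊕ Fin n₂) ℂ)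
    (B : Matrix (Fin n₁ ⊕ Fin n₂) (Fin 2) ℂ)
    (J : Matrix (Fin 2) (Fin 2) ℂ)
    (A : Matrix (Fin n₁ ⊕ Fin n₂) (Fin n₁ ⊕ Fin n₂) ℂ)
    (hA : A = fromBlocks A₁₁ 0 A₂₁ A₂₂)
    (lam : ℂ)
    (hS : IsUnit S.det) (hS₁₁ : IsUnit S.toBlocks₁₁.det)
    (hl₁ : IsUnit (A₁₁ - lam • (1 : Matrix (Fin n₁) (Fin n₁) ℂ)).det)
    (hl₂ : IsUnit (A₂₂ - lam • (1 : Matrix (Fin n₂) (Fin n₂) ℂ)).det)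
    (hid : A * S - S * Aᴴ = B * J * Bᴴ)
    (P₁ : Matrix (Fin n₁) (Fin n₁ ⊕ Fin n₂) ℂ) (hP₁ : P₁ = fromCols 1 0)
    (P₂ : Matrix (Fin n₂) (Fin n₁ ⊕ Fin n₂) ℂ) (hP₂ : P₂ = fromCols 0 1)
    (T₂₂ : Matrix (Fin n₂) (Fin n₂) ℂ) (hT : T₂₂ = (S⁻¹).toBlocks₂₂) :
    (1 : Matrix (Fin 2) (Fin 2) ℂ)
        - J * Bᴴ * S⁻¹ * (A - lam • (1 : Matrix (Fin n₁ ⊕ Fin n₂) (Fin n₁ ⊕ Fin n₂) ℂ))⁻¹ * B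
    = ((1 : Matrix (Fin 2) (Fin 2) ℂ)
        - J * Bᴴ * S⁻¹ * P₂ᴴ
          * (A₂₂ - lam • (1 : Matrix (Fin n₂) (Fin n₂) ℂ))⁻¹ * T₂₂⁻¹ * (P₂ * (S⁻¹ * B)))
      * ((1 : Matrix (Fin 2) (Fin 2) ℂ)
        - J * Bᴴ * P₁ᴴ * S.toBlocks₁₁⁻¹
          * (A₁₁ - lam • (1 : Matrix (Fin n₁) (Fin n₁) ℂ))⁻¹ * (P₁ * B)) := by
  subst hA
  obtain ⟨B₁, B₂, rfl⟩ : ∃ B₁ B₂, B = fromRows B₁ B₂ := ⟨_, _, (fromRows_toRows B).symm⟩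
  obtain ⟨S₁₁, S₁₂, S₂₁, S₂₂, rfl⟩ : ∃ S₁₁ S₁₂ S₂₁ S₂₂, S = fromBlocks S₁₁ S₁₂ S₂₁ S₂₂ :=
    ⟨_, _, _, _, (fromBlocks_toBlocks S).symm⟩
  rw [toBlocks_fromBlocks₁₁] at hS₁₁ ⊢
  obtain ⟨L, rfl⟩ : ∃ L, L * S₁₁ = S₂₁ := ⟨S₂₁ * S₁₁⁻¹, nonsing_inv_mul_cancel_right _ _ hS₁₁⟩
  have hZ := isUnit_det_sub_mul_of_mul_eq rfl hS
  have hXY := fromBlocks_shear_neg_mul_shear L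
  rw [conjTranspose_fromRows_eq_fromCols_conjTranspose, Matrix.mul_assoc, mul_fromCols,
    fromBlocks_conjTranspose, conjTranspose_zero] at hid
  have hM := shear_conj₂₁_eq_of_mul_sub_mul_eq rfl hS₁₁ hid
  rw [inv_fromBlocks_eq_of_mul_eq rfl hS₁₁ hS] at hT ⊢
  set V := fromBlocks S₁₁⁻¹ (-(S₁₁⁻¹ * S₁₂ * (S₂₂ - L * S₁₂)⁻¹)) 0 (S₂₂ - L * S₁₂)⁻¹ with hV
  rw [mul_mul_inv_mul_eq_of_mul_eq_one hXY, conj_sub_smul_one hXY, fromBlocks_shear_conj,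
    fromBlocks_sub_smul_one, fromBlocks_shear_neg_mul_fromRows, hM]
  have hC : J * (fromRows B₁ B₂)ᴴ * V = fromCols (J * B₁ᴴ * S₁₁⁻¹)
      (J * (fromRows B₁ B₂)ᴴ * (V * fromBlocks 1 0 (-L) 1) * P₂ᴴ) := by
    simp [hV, hP₂, conjTranspose_fromRows_eq_fromCols_conjTranspose,
      conjTranspose_fromCols_eq_fromRows_conjTranspose, fromCols_mul_fromBlocks,
      fromBlocks_mul_fromRows, fromCols_mul_fromRows, Matrix.mul_assoc]
  have hB₂ : T₂₂⁻¹ * (P₂ * (V * fromBlocks 1 0 (-L) 1 * fromRows B₁ B₂)) = B₂ - L * B₁ := by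
    have hT₂₂ : T₂₂ = (S₂₂ - L * S₁₂)⁻¹ := by simp [hT, hV, fromBlocks_multiply]
    rw [hT₂₂, nonsing_inv_nonsing_inv _ hZ, Matrix.mul_assoc, fromBlocks_shear_neg_mul_fromRows,
      hP₂, hV]
    simp only [fromBlocks_mul_fromRows, fromCols_mul_fromRows, Matrix.zero_mul, Matrix.one_mul,
      zero_add, mul_nonsing_inv_cancel_left _ _ hZ]
  rw [hC, one_sub_fromCols_mul_inv_fromBlocks_mul_fromRows, ← hB₂]
  · simp [hP₁, conjTranspose_fromRows_eq_fromCols_conjTranspose,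
      conjTranspose_fromCols_eq_fromRows_conjTranspose, fromCols_mul_fromRows, Matrix.mul_assoc]
  · simp only [isUnit_iff_isUnit_det, hl₁, hl₂]

/-- Factorization of the transfer matrix function for a block lower triangular A:
w_A(λ) = w₂(λ) w₁(λ). -/
theorem stmt_7 {n₁ n₂ : ℕ}
    (A₁₁ : Matrix (Fin n₁) (Fin n₁) ℂ) (A₂₁ : Matrix (Fin n₂) (Fin n₁) ℂ)
    (A₂₂ : Matrix (Fin n₂) (Fin n₂) ℂ)
    (S : Matrix (Fin n₁ ⊕ Fin n₂) (Fin n₁ ⊕ Fin n₂) ℂ)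
    (B : Matrix (Fin n₁ ⊕ Fin n₂) (Fin 2) ℂ)
    (J : Matrix (Fin 2) (Fin 2) ℂ) (hJ : J = !![0, 1; -1, 0])
    (A : Matrix (Fin n₁ ⊕ Fin n₂) (Fin n₁ ⊕ Fin n₂) ℂ)
    (hA : A = fromBlocks A₁₁ 0 A₂₁ A₂₂)
    (lam : ℂ)
    (hS : IsUnit S.det) (hS₁₁ : IsUnit S.toBlocks₁₁.det)
    (hl₁ : IsUnit (A₁₁ - lam • (1 : Matrix (Fin n₁) (Fin n₁) ℂ)).det)
    (hl₂ : IsUnit (A₂₂ - lam • (1 : Matrix (Fin n₂) (Fin n₂) ℂ)).det)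
    (hid : A * S - S * Aᴴ = B * J * Bᴴ)
    (P₁ : Matrix (Fin n₁) (Fin n₁ ⊕ Fin n₂) ℂ) (hP₁ : P₁ = fromCols 1 0)
    (P₂ : Matrix (Fin n₂) (Fin n₁ ⊕ Fin n₂) ℂ) (hP₂ : P₂ = fromCols 0 1)
    (T₂₂ : Matrix (Fin n₂) (Fin n₂) ℂ) (hT : T₂₂ = (S⁻¹).toBlocks₂₂) :
    (1 : Matrix (Fin 2) (Fin 2) ℂ)
        - J * Bᴴ * S⁻¹ * (A - lam • (1 : Matrix (Fin n₁ ⊕ Fin n₂) (Fin n₁ ⊕ Fin n₂) ℂ))⁻¹ * B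
    = ((1 : Matrix (Fin 2) (Fin 2) ℂ)
        - J * Bᴴ * S⁻¹ * P₂ᴴ
          * (A₂₂ - lam • (1 : Matrix (Fin n₂) (Fin n₂) ℂ))⁻¹ * T₂₂⁻¹ * (P₂ * (S⁻¹ * B)))
      * ((1 : Matrix (Fin 2) (Fin 2) ℂ)
        - J * Bᴴ * P₁ᴴ * S.toBlocks₁₁⁻¹
          * (A₁₁ - lam • (1 : Matrix (Fin n₁) (Fin n₁) ℂ))⁻¹ * (P₁ * B)) :=
  stmt_7_general A₁₁ A₂₁ A₂₂ S B J A hA lam hS hS₁₁ hl₁ hl₂ hid P₁ hP₁ P₂ hP₂ T₂₂ hT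
end

section
/- For the S-node with A₁ = A, A₂ = A*, Π₂* = J̆ Π*, and A S − S A* = Π J̆ Π* with S invertible, the quantity X₋₁ := Π₂* S⁻¹ A⁻¹ Π₁ and Y₋₁ := Π₂* (A*)⁻¹ S⁻¹ Π₁ (assuming A invertible) satisfy (I_m − X₋₁)(I_m + Y₋₁) = I_m. -/
open Matrix

/-- For an S-node with A S − S A₂ = Π₁ Π₂*, all of A, A₂, S invertible, the quantities
X₋₁ = Π₂* S⁻¹ A⁻¹ Π₁ and Y₋₁ = Π₂* A₂⁻¹ S⁻¹ Π₁ satisfy (I − X₋₁)(I + Y₋₁) = I. -/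
theorem stmt_10 {n m : ℕ} (A A₂ S : Matrix (Fin n) (Fin n) ℂ)
    (B₁ B₂ : Matrix (Fin n) (Fin m) ℂ)
    (hA : IsUnit A.det) (hA₂ : IsUnit A₂.det) (hS : IsUnit S.det)
    (hid : A * S - S * A₂ = B₁ * B₂ᴴ) :
    ((1 : Matrix (Fin m) (Fin m) ℂ) - B₂ᴴ * S⁻¹ * A⁻¹ * B₁)
      * ((1 : Matrix (Fin m) (Fin m) ℂ) + B₂ᴴ * A₂⁻¹ * S⁻¹ * B₁) = 1 := by
  have hA1 : A⁻¹ * A = 1 := nonsing_inv_mul A hA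
  have hS1 : S⁻¹ * S = 1 := nonsing_inv_mul S hS
  have hS2 : S * S⁻¹ = 1 := mul_nonsing_inv S hS
  have hA21 : A₂ * A₂⁻¹ = 1 := mul_nonsing_inv A₂ hA₂
  have key : (B₂ᴴ * S⁻¹ * A⁻¹ * B₁) * (B₂ᴴ * A₂⁻¹ * S⁻¹ * B₁)
      = B₂ᴴ * A₂⁻¹ * S⁻¹ * B₁ - B₂ᴴ * S⁻¹ * A⁻¹ * B₁ := by
    calc (B₂ᴴ * S⁻¹ * A⁻¹ * B₁) * (B₂ᴴ * A₂⁻¹ * S⁻¹ * B₁)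
        = B₂ᴴ * S⁻¹ * A⁻¹ * (B₁ * B₂ᴴ) * A₂⁻¹ * S⁻¹ * B₁ := by
          simp only [Matrix.mul_assoc]
      _ = B₂ᴴ * S⁻¹ * A⁻¹ * (A * S - S * A₂) * A₂⁻¹ * S⁻¹ * B₁ := by rw [hid]
      _ = B₂ᴴ * (S⁻¹ * ((A⁻¹ * A) * (S * (A₂⁻¹ * (S⁻¹ * B₁)))))
          - B₂ᴴ * (S⁻¹ * (A⁻¹ * (S * ((A₂ * A₂⁻¹) * (S⁻¹ * B₁))))) := by
          simp only [Matrix.mul_sub, Matrix.sub_mul, Matrix.mul_assoc]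
      _ = B₂ᴴ * (S⁻¹ * (S * (A₂⁻¹ * (S⁻¹ * B₁))))
          - B₂ᴴ * (S⁻¹ * (A⁻¹ * (S * (S⁻¹ * B₁)))) := by
          rw [hA1, hA21, Matrix.one_mul, Matrix.one_mul]
      _ = B₂ᴴ * A₂⁻¹ * S⁻¹ * B₁ - B₂ᴴ * S⁻¹ * A⁻¹ * B₁ := by
          rw [← Matrix.mul_assoc S⁻¹ S, hS1, Matrix.one_mul,
              ← Matrix.mul_assoc S S⁻¹, hS2, Matrix.one_mul]
          simp only [Matrix.mul_assoc]
  simp only [Matrix.sub_mul, Matrix.mul_add, Matrix.add_mul, Matrix.one_mul,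
    Matrix.mul_one, key]
  abel
end

section
/- Let Π(x) = [e^{−ixA} Φ₁ e^{ixA} Φ₂] (an n×(p+p) matrix function), S(x) = I_n + ∫₀ˣ Π(t) Π(t)* dt, and suppose A − A* = i Π(0) j Π(0)* with j = diag(I_p, −I_p). Then for all x ≥ 0, A S(x) − S(x) A* = i Π(x) j Π(x)*. -/
/-!
Write `Π = [E₁ E₂]` with `E₁(x) = e^{-ixA} Φ₁` and `E₂(x) = e^{ixA} Φ₂`. Then `Π Π* = E₁E₁* + E₂E₂*`
and `Π j Π* = E₁E₁* - E₂E₂*` are square, and for purely imaginary `c` the matrix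
`F = e^{xcA} Φ Φ* e^{-xcA*}` satisfies `F' = c (A F - F A*)`. Hence `(i Π j Π*)' = A Π Π* - Π Π* A*`,
and integrating from `0` to `x` gives `A (S - 1) - (S - 1) A* = i Π(x) j Π(x)* - i Π(0) j Π(0)*`;
the hypothesis at `x = 0` accounts for `A - A*`.
-/

open Matrix MeasureTheory NormedSpace

section NormedAlgebra

variable {𝔸 : Type*} [NormedRing 𝔸] [NormedAlgebra ℝ 𝔸] [CompleteSpace 𝔸]

theorem hasDerivAt_exp_smul_mul_mul_exp_smul (B M C : 𝔸) (t : ℝ) :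
    HasDerivAt (fun s : ℝ => exp (s • B) * M * exp (s • C))
      (B * (exp (t • B) * M * exp (t • C)) + exp (t • B) * M * exp (t • C) * C) t := by
  simpa only [Pi.mul_def, mul_assoc] using
    ((hasDerivAt_exp_smul_const' B t).mul_const M).mul (hasDerivAt_exp_smul_const C t)

theorem mul_intervalIntegral_sub_intervalIntegral_mul {G Q : ℝ → 𝔸} (A A' : 𝔸)
    (hQ : Continuous Q) (hG : ∀ t, HasDerivAt G (A * Q t - Q t * A') t) (a b : ℝ) :
    A * (∫ t in a..b, Q t) - (∫ t in a..b, Q t) * A' = G b - G a := by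
  have hQi := hQ.intervalIntegrable (μ := volume) a b
  have hAQ : Continuous fun t => A * Q t := continuous_const.mul hQ
  have hQA : Continuous fun t => Q t * A' := hQ.mul continuous_const
  rw [← intervalIntegral.integral_eq_sub_of_hasDerivAt (fun t _ => hG t)
    ((hAQ.sub hQA).intervalIntegrable a b),
    intervalIntegral.integral_sub (hAQ.intervalIntegrable a b) (hQA.intervalIntegrable a b)]
  congr 1
  · exact ((ContinuousLinearMap.mul ℝ 𝔸 A).intervalIntegral_comp_comm hQi).symm
  · exact (((ContinuousLinearMap.mul ℝ 𝔸).flip A').intervalIntegral_comp_comm hQi).symm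

end NormedAlgebra

section Blocks

variable {m n α : Type*} [Fintype n] [Ring α] [StarRing α]

theorem Matrix.fromCols_mul_conjTranspose (D₁ D₂ : Matrix m n α) :
    fromCols D₁ D₂ * (fromCols D₁ D₂)ᴴ = D₁ * D₁ᴴ + D₂ * D₂ᴴ := by
  rw [conjTranspose_fromCols_eq_fromRows_conjTranspose, fromCols_mul_fromRows]

theorem Matrix.fromCols_mul_fromBlocks_mul_conjTranspose [DecidableEq n] (D₁ D₂ : Matrix m n α) :
    fromCols D₁ D₂ * (fromBlocks 1 0 0 (-1) : Matrix (n ⊕ n) (n ⊕ n) α) * (fromCols D₁ D₂)ᴴ =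
      D₁ * D₁ᴴ - D₂ * D₂ᴴ := by
  rw [Matrix.fromCols_mul_fromBlocks D₁ D₂, conjTranspose_fromCols_eq_fromRows_conjTranspose,
    fromCols_mul_fromRows]
  simp [sub_eq_add_neg]

end Blocks

section LinftyOp

attribute [local instance] Matrix.linftyOpNormedAddCommGroup Matrix.linftyOpNormedSpace
  Matrix.linftyOpNormedRing Matrix.linftyOpNormedAlgebra

variable {m n : Type*} [Fintype m] [Fintype n]

/- Instance search must see the topology of the norm, not the (defeq, but not reducibly so)
product topology `Matrix.topologicalSpace`. -/
noncomputable abbrev Matrix.linftyOpTopologicalSpace : TopologicalSpace (Matrix m n ℂ) :=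
  (Matrix.linftyOpNormedAddCommGroup (m := m) (n := n) (α := ℂ)).toUniformSpace.toTopologicalSpace

attribute [local instance] Matrix.linftyOpTopologicalSpace

theorem Matrix.intervalIntegral_apply {f : ℝ → Matrix m n ℂ} {a b : ℝ}
    (hf : IntervalIntegrable f volume a b) (i : m) (k : n) :
    (∫ t in a..b, f t) i k = ∫ t in a..b, f t i k :=
  (ContinuousLinearMap.intervalIntegral_comp_comm
    { toLinearMap := entryLinearMap ℝ ℂ i k
      cont := (continuous_apply k).comp (continuous_apply i) } hf).symm

variable [DecidableEq n]

theorem exp_smul_mul_mul_conjTranspose (A : Matrix n n ℂ) (Φ : Matrix n m ℂ) (c : ℂ) (t : ℝ) :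
    exp ((c * t) • A) * Φ * (exp ((c * t) • A) * Φ)ᴴ =
      exp (t • (c • A)) * (Φ * Φᴴ) * exp (t • (star c • Aᴴ)) := by
  -- `exp_conjTranspose` is stated for the product topology, so it can only be used up to defeq.
  have hexp : (exp ((c * t) • A))ᴴ = exp ((c * t) • A)ᴴ := (exp_conjTranspose _).symm
  rw [conjTranspose_mul, hexp, conjTranspose_smul, star_mul', Complex.star_def,
    Complex.conj_ofReal, mul_comm, mul_smul, mul_comm, mul_smul, Complex.coe_smul,
    Complex.coe_smul, Matrix.mul_assoc, Matrix.mul_assoc, Matrix.mul_assoc]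

theorem hasDerivAt_exp_smul_mul_mul_conjTranspose (A : Matrix n n ℂ) (Φ : Matrix n m ℂ) {c : ℂ}
    (hc : star c = -c) (x : ℝ) :
    HasDerivAt (fun t : ℝ => exp ((c * t) • A) * Φ * (exp ((c * t) • A) * Φ)ᴴ)
      (c • (A * (exp ((c * x) • A) * Φ * (exp ((c * x) • A) * Φ)ᴴ)
        - exp ((c * x) • A) * Φ * (exp ((c * x) • A) * Φ)ᴴ * Aᴴ)) x := by
  simp_rw [exp_smul_mul_mul_conjTranspose, hc]
  refine (hasDerivAt_exp_smul_mul_mul_exp_smul (c • A) (Φ * Φᴴ) (-c • Aᴴ) x).congr_deriv ?_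
  rw [smul_mul_assoc, neg_smul, mul_neg, mul_smul_comm, smul_sub, sub_eq_add_neg]

theorem mul_integral_sub_integral_mul_conjTranspose_eq_sub [DecidableEq m] (A : Matrix n n ℂ)
    (Φ₁ Φ₂ : Matrix n m ℂ) (P : ℝ → Matrix n (m ⊕ m) ℂ)
    (hP : ∀ x : ℝ, P x = fromCols (exp (((-Complex.I) * (x : ℂ)) • A) * Φ₁)
      (exp ((Complex.I * (x : ℂ)) • A) * Φ₂)) (a b : ℝ) :
    A * of (fun i k => ∫ t in a..b, (P t * (P t)ᴴ) i k)
        - of (fun i k => ∫ t in a..b, (P t * (P t)ᴴ) i k) * Aᴴ =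
      Complex.I • (P b * (fromBlocks 1 0 0 (-1) : Matrix (m ⊕ m) (m ⊕ m) ℂ) * (P b)ᴴ)
        - Complex.I • (P a * (fromBlocks 1 0 0 (-1) : Matrix (m ⊕ m) (m ⊕ m) ℂ) * (P a)ᴴ) := by
  set E : ℂ → Matrix n m ℂ → ℝ → Matrix n n ℂ :=
    fun c Φ t => exp ((c * t) • A) * Φ * (exp ((c * t) • A) * Φ)ᴴ
  have hE (c : ℂ) (hc : star c = -c) (Φ : Matrix n m ℂ) (t : ℝ) :
      HasDerivAt (E c Φ) (c • (A * E c Φ t - E c Φ t * Aᴴ)) t :=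
    hasDerivAt_exp_smul_mul_mul_conjTranspose A Φ hc t
  have hQ (t : ℝ) : P t * (P t)ᴴ = E (-Complex.I) Φ₁ t + E Complex.I Φ₂ t := by
    rw [hP, fromCols_mul_conjTranspose]
  have hG (t : ℝ) : P t * (fromBlocks 1 0 0 (-1) : Matrix (m ⊕ m) (m ⊕ m) ℂ) * (P t)ᴴ =
      E (-Complex.I) Φ₁ t - E Complex.I Φ₂ t := by
    rw [hP, fromCols_mul_fromBlocks_mul_conjTranspose]
  have hcont : Continuous fun t => P t * (P t)ᴴ := by
    simp_rw [hQ]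
    exact continuous_iff_continuousAt.2 fun t =>
      ((hE _ (by simp) Φ₁ t).add (hE _ (by simp) Φ₂ t)).continuousAt
  have hderiv (t : ℝ) : HasDerivAt
      (fun t => Complex.I • (P t * (fromBlocks 1 0 0 (-1) : Matrix (m ⊕ m) (m ⊕ m) ℂ) * (P t)ᴴ))
      (A * (P t * (P t)ᴴ) - P t * (P t)ᴴ * Aᴴ) t := by
    simp_rw [hG, hQ]
    refine (((hE _ (by simp) Φ₁ t).sub (hE _ (by simp) Φ₂ t)).const_smul Complex.I).congr_deriv ?_
    rw [mul_add, add_mul]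
    match_scalars <;> simp
  rw [show of (fun i k => ∫ t in a..b, (P t * (P t)ᴴ) i k) = ∫ t in a..b, P t * (P t)ᴴ from
    ext fun i k => (intervalIntegral_apply (hcont.intervalIntegrable a b) i k).symm]
  exact mul_intervalIntegral_sub_intervalIntegral_mul A Aᴴ hcont hderiv a b

end LinftyOp

/-- For Π(x) = [e^{−ixA}Φ₁  e^{ixA}Φ₂], S(x) = I + ∫₀ˣ Π Π* dt, the identity
A − A* = i Π(0) j Π(0)* at x = 0 propagates: A S(x) − S(x) A* = i Π(x) j Π(x)*
for all x ≥ 0. -/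
theorem stmt_11 {n p : ℕ} (A : Matrix (Fin n) (Fin n) ℂ)
    (Φ₁ Φ₂ : Matrix (Fin n) (Fin p) ℂ)
    (jm : Matrix (Fin p ⊕ Fin p) (Fin p ⊕ Fin p) ℂ)
    (hj : jm = fromBlocks 1 0 0 (-1))
    (P : ℝ → Matrix (Fin n) (Fin p ⊕ Fin p) ℂ)
    (hP : ∀ x : ℝ, P x = fromCols
      (NormedSpace.exp (((-Complex.I) * (x : ℂ)) • A) * Φ₁)
      (NormedSpace.exp ((Complex.I * (x : ℂ)) • A) * Φ₂))
    (S : ℝ → Matrix (Fin n) (Fin n) ℂ)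
    (hS : ∀ x : ℝ, S x = 1 + Matrix.of (fun i k =>
      ∫ t in (0:ℝ)..x, (P t * (P t)ᴴ) i k))
    (hid : A - Aᴴ = Complex.I • (P 0 * jm * (P 0)ᴴ)) :
    ∀ x : ℝ, 0 ≤ x →
      A * S x - S x * Aᴴ = Complex.I • (P x * jm * (P x)ᴴ) := by
  intro x _
  rw [hS x, Matrix.mul_add, Matrix.add_mul, Matrix.mul_one, Matrix.one_mul, add_sub_add_comm, hid,
    mul_integral_sub_integral_mul_conjTranspose_eq_sub A Φ₁ Φ₂ P hP 0 x, hj]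
  abel
end

section
/- With the matrix identity A S − S A* = i Π Π* and S > 0 (positive definite), the transfer matrix w_A(λ) = I_m − i Π* S⁻¹ (A − λ I_n)⁻¹ Π satisfies w_A(λ)* w_A(λ) = I_m − i(λ − conj(λ)) Π* (A* − λ̄ I_n)⁻¹ S⁻¹ (A − λ I_n)⁻¹ Π; in particular w_A(λ)* w_A(λ) ≤ I_m for Im λ < 0 and w_A(λ)* w_A(λ) = I_m for real λ ∉ σ(A). -/
open Matrix Complex
open scoped ComplexOrder

/-!
Put `M = A - λ I`, so that the colligation identity becomes
`M S - S M* = i Π Π* - (λ - λ̄) S`. Sandwiching it between `Q* S⁻¹` and `S⁻¹ Q`, where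
`Q = M⁻¹ Π`, expresses the quadratic term `Q* S⁻¹ Π Π* S⁻¹ Q` of `w* w` through its linear
terms, which then cancel and leave `I - i(λ - λ̄) Q* S⁻¹ Q`. For `Im λ < 0` the scalar `i(λ - λ̄) = -2 Im λ`
is positive and `Q* S⁻¹ Q ≥ 0`; for real `λ` it vanishes.
-/

variable {n m : Type*} [Fintype n] [DecidableEq n] [Fintype m] [DecidableEq m]

lemma sub_smul_one_mul_sub_mul_conjTranspose {R : Type*} [CommRing R] [StarRing R]
    (A S : Matrix n n R) (c : R) :
    (A - c • 1) * S - S * (A - c • 1)ᴴ = A * S - S * Aᴴ - (c - starRingEnd R c) • S := by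
  simp only [conjTranspose_sub, conjTranspose_smul, conjTranspose_one, Matrix.sub_mul,
    Matrix.mul_sub, Matrix.smul_mul, Matrix.mul_smul, Matrix.one_mul, Matrix.mul_one, sub_smul,
    starRingEnd_apply]
  abel

/-- `G` and `Q` play the roles of `S⁻¹` and `M⁻¹ B`. -/
lemma conjTranspose_mul_self_of_colligation {M S G : Matrix n n ℂ} {B Q : Matrix n m ℂ} {c : ℂ}
    (hG : Gᴴ = G) (hSG : S * G = 1) (hGS : G * S = 1) (hMQ : M * Q = B)
    (h : M * S - S * Mᴴ = I • (B * Bᴴ) - c • S) :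
    (1 - I • (Bᴴ * G * Q))ᴴ * (1 - I • (Bᴴ * G * Q)) = 1 - (I * c) • (Qᴴ * G * Q) := by
  set X := Qᴴ * G * B
  set Y := Bᴴ * G * Q
  have hMQH : Qᴴ * Mᴴ = Bᴴ := by rw [← conjTranspose_mul, hMQ]
  have hSG' (Z : Matrix n m ℂ) : S * (G * Z) = Z := by rw [← Matrix.mul_assoc, hSG, Matrix.one_mul]
  have hGS' (Z : Matrix n m ℂ) : G * (S * Z) = Z := by rw [← Matrix.mul_assoc, hGS, Matrix.one_mul]
  have hsandwich : I • (X * Y) = X - Y + c • (Qᴴ * G * Q) := by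
    have hBB : I • (B * Bᴴ) = M * S - S * Mᴴ + c • S := by rw [h]; abel
    calc I • (X * Y) = Qᴴ * G * (I • (B * Bᴴ)) * G * Q := by
          simp only [X, Y, Matrix.smul_mul, Matrix.mul_smul, Matrix.mul_assoc]
      _ = X - Y + c • (Qᴴ * G * Q) := by
          rw [hBB]
          simp only [Matrix.mul_add, Matrix.add_mul, Matrix.mul_sub, Matrix.sub_mul,
            Matrix.mul_smul, Matrix.smul_mul, Matrix.mul_assoc, hSG', hGS']
          rw [hMQ, ← Matrix.mul_assoc Qᴴ Mᴴ, hMQH]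
          simp only [X, Y, Matrix.mul_assoc]
  have hwH : (1 - I • Y)ᴴ = 1 + I • X := by
    simp only [Y, X, conjTranspose_sub, conjTranspose_one, conjTranspose_smul, conjTranspose_mul,
      conjTranspose_conjTranspose, hG, Complex.star_def, conj_I, neg_smul, sub_neg_eq_add,
      Matrix.mul_assoc]
  calc (1 - I • Y)ᴴ * (1 - I • Y) = 1 + I • X - I • Y - I • (I • (X * Y)) := by
        rw [hwH, Matrix.add_mul, Matrix.one_mul, Matrix.mul_sub, Matrix.mul_one, Matrix.smul_mul,
          Matrix.mul_smul]
        module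
    _ = 1 - (I * c) • (Qᴴ * G * Q) := by
        rw [hsandwich]
        module

lemma zero_le_I_mul_sub_conj {lam : ℂ} (h : lam.im ≤ 0) : 0 ≤ I * (lam - starRingEnd ℂ lam) := by
  have hreal : I * (lam - starRingEnd ℂ lam) = ((-2 * lam.im : ℝ) : ℂ) := by
    rw [sub_conj]
    push_cast
    linear_combination (2 * (lam.im : ℂ)) * I_sq
  rw [hreal]
  exact zero_le_real.mpr (by linarith)

theorem stmt_12_general {n m : ℕ} (A S : Matrix (Fin n) (Fin n) ℂ)
    (B : Matrix (Fin n) (Fin m) ℂ) (lam : ℂ)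
    (hS : S.PosDef)
    (hA : IsUnit (A - lam • (1 : Matrix (Fin n) (Fin n) ℂ)).det)
    (hid : A * S - S * Aᴴ = Complex.I • (B * Bᴴ))
    (w : Matrix (Fin m) (Fin m) ℂ)
    (hw : w = 1 - Complex.I •
      (Bᴴ * S⁻¹ * (A - lam • (1 : Matrix (Fin n) (Fin n) ℂ))⁻¹ * B)) :
    wᴴ * w = 1 - (Complex.I * (lam - starRingEnd ℂ lam)) •
        (Bᴴ * (Aᴴ - (starRingEnd ℂ lam) • (1 : Matrix (Fin n) (Fin n) ℂ))⁻¹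
          * S⁻¹ * (A - lam • (1 : Matrix (Fin n) (Fin n) ℂ))⁻¹ * B)
    ∧ (lam.im < 0 → ((1 : Matrix (Fin m) (Fin m) ℂ) - wᴴ * w).PosSemidef)
    ∧ (lam.im = 0 → wᴴ * w = 1) := by
  set M := A - lam • (1 : Matrix (Fin n) (Fin n) ℂ)
  have hMH : Mᴴ = Aᴴ - (starRingEnd ℂ lam) • (1 : Matrix (Fin n) (Fin n) ℂ) := by
    simp [M, conjTranspose_smul]
  have hSunit : IsUnit S.det := hS.det_pos.ne'.isUnit
  have hMQ : M * (M⁻¹ * B) = B := by rw [← Matrix.mul_assoc, mul_nonsing_inv M hA, Matrix.one_mul]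
  have hform : Bᴴ * (Aᴴ - (starRingEnd ℂ lam) • (1 : Matrix (Fin n) (Fin n) ℂ))⁻¹ * S⁻¹ * M⁻¹ * B
      = (M⁻¹ * B)ᴴ * S⁻¹ * (M⁻¹ * B) := by
    rw [← hMH, conjTranspose_mul, conjTranspose_nonsing_inv]
    simp only [Matrix.mul_assoc]
  have identity : wᴴ * w = 1 - (I * (lam - starRingEnd ℂ lam)) •
      (Bᴴ * (Aᴴ - (starRingEnd ℂ lam) • (1 : Matrix (Fin n) (Fin n) ℂ))⁻¹ * S⁻¹ * M⁻¹ * B) := by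
    rw [hw, Matrix.mul_assoc _ M⁻¹, hform]
    refine conjTranspose_mul_self_of_colligation hS.1.inv.eq (mul_nonsing_inv S hSunit)
      (nonsing_inv_mul S hSunit) hMQ ?_
    rw [sub_smul_one_mul_sub_mul_conjTranspose, hid]
  refine ⟨identity, fun him => ?_, fun him => ?_⟩
  · rw [identity, sub_sub_cancel, hform]
    exact (hS.inv.posSemidef.conjTranspose_mul_mul_same _).smul (zero_le_I_mul_sub_conj him.le)
  · rw [identity, conj_eq_iff_im.mpr him, sub_self, mul_zero, zero_smul, sub_zero]

/-- With A S − S A* = i Π Π* and S > 0, the transfer matrix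
w_A(λ) = I − i Π* S⁻¹ (A − λI)⁻¹ Π satisfies
w_A(λ)* w_A(λ) = I − i(λ − λ̄) Π* (A* − λ̄ I)⁻¹ S⁻¹ (A − λI)⁻¹ Π;
in particular it is contractive for Im λ < 0 and unitary-valued for real λ ∉ σ(A). -/
theorem stmt_12 {n m : ℕ} (A S : Matrix (Fin n) (Fin n) ℂ)
    (B : Matrix (Fin n) (Fin m) ℂ) (lam : ℂ)
    (hS : S.PosDef)
    (hA : IsUnit (A - lam • (1 : Matrix (Fin n) (Fin n) ℂ)).det)
    (hAs : IsUnit (Aᴴ - (starRingEnd ℂ lam) • (1 : Matrix (Fin n) (Fin n) ℂ)).det)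
    (hid : A * S - S * Aᴴ = Complex.I • (B * Bᴴ))
    (w : Matrix (Fin m) (Fin m) ℂ)
    (hw : w = 1 - Complex.I •
      (Bᴴ * S⁻¹ * (A - lam • (1 : Matrix (Fin n) (Fin n) ℂ))⁻¹ * B)) :
    wᴴ * w = 1 - (Complex.I * (lam - starRingEnd ℂ lam)) •
        (Bᴴ * (Aᴴ - (starRingEnd ℂ lam) • (1 : Matrix (Fin n) (Fin n) ℂ))⁻¹
          * S⁻¹ * (A - lam • (1 : Matrix (Fin n) (Fin n) ℂ))⁻¹ * B)
    ∧ (lam.im < 0 → ((1 : Matrix (Fin m) (Fin m) ℂ) - wᴴ * w).PosSemidef)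
    ∧ (lam.im = 0 → wᴴ * w = 1) :=
  stmt_12_general A S B lam hS hA hid w hw
end

section
/- Let ζ(x,t) = [[0, e^{−iv/2}],[e^{iv/2}, 0]] for a real-valued C² function v, and define G = (1/4)(iλζ + v_t j − (i/λ) J ζ J) and F = −(1/4)(λζ + v_x j + (1/λ) J ζ J), where j = diag(1,−1) and J = [[0,1],[1,0]]. Then the zero curvature equation G_t − F_x + [G, F] = 0 holds for all λ ≠ 0 if and only if v satisfies the elliptic sine-Gordon equation v_tt + v_xx = sin v. -/
/-!
Write `a = exp (-i v/2)` and `b = exp (i v/2)`. Then `G` and `F` are explicit `2 × 2` matrices whose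
diagonals are `±v_t/4` and `∓v_x/4`. Differentiating the off-diagonal entries of `G` in `t` gives
`v_t/2` times those of `F` (and symmetrically for `F` in `x`), and these terms cancel against the
off-diagonal part of `[G, F]`. On the diagonal, `[G, F]` contributes `± i (b² - a²)/8 = ∓ sin v/4`,
so the curvature `G_t - F_x + [G, F]` equals `((v_tt + v_xx - sin v)/4) • j` for every `λ ≠ 0`.
-/

open Matrix Complex

namespace EllipticSineGordon

noncomputable def laxG (lam : ℂ) (w p : ℝ) : Matrix (Fin 2) (Fin 2) ℂ :=
  !![p / 4, I * (lam * exp (-I * w / 2) - exp (I * w / 2) / lam) / 4;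
    I * (lam * exp (I * w / 2) - exp (-I * w / 2) / lam) / 4, -p / 4]

noncomputable def laxF (lam : ℂ) (w q : ℝ) : Matrix (Fin 2) (Fin 2) ℂ :=
  !![-q / 4, -(lam * exp (-I * w / 2) + exp (I * w / 2) / lam) / 4;
    -(lam * exp (I * w / 2) + exp (-I * w / 2) / lam) / 4, q / 4]

lemma laxG_eq (lam : ℂ) (w p : ℝ) :
    (I * lam / 4) • !![0, exp (-I * w / 2); exp (I * w / 2), 0] + ((p : ℂ) / 4) • !![1, 0; 0, -1]
      - (I / (4 * lam)) •
        (!![0, 1; 1, 0] * !![0, exp (-I * w / 2); exp (I * w / 2), 0] * !![0, 1; 1, 0]) =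
      laxG lam w p := by
  ext i j
  fin_cases i <;> fin_cases j <;>
    simp only [laxG, Matrix.sub_apply, Matrix.add_apply, Matrix.smul_apply, mul_apply,
      Fin.sum_univ_two, of_apply, Fin.zero_eta, Fin.mk_one, Fin.isValue, cons_val_zero,
      cons_val_one, cons_val_fin_one, smul_eq_mul] <;>
    ring

lemma laxF_eq (lam : ℂ) (w q : ℝ) :
    -((lam / 4) • !![0, exp (-I * w / 2); exp (I * w / 2), 0] + ((q : ℂ) / 4) • !![1, 0; 0, -1]
      + (1 / (4 * lam)) •
        (!![0, 1; 1, 0] * !![0, exp (-I * w / 2); exp (I * w / 2), 0] * !![0, 1; 1, 0])) =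
      laxF lam w q := by
  ext i j
  fin_cases i <;> fin_cases j <;>
    simp only [laxF, Matrix.neg_apply, Matrix.add_apply, Matrix.smul_apply, mul_apply,
      Fin.sum_univ_two, of_apply, Fin.zero_eta, Fin.mk_one, Fin.isValue, cons_val_zero,
      cons_val_one, cons_val_fin_one, smul_eq_mul] <;>
    ring

section Derivatives

variable {w p : ℝ → ℝ} {w' p' t : ℝ} (lam : ℂ)

lemma hasDerivAt_cexp_mul_ofReal_div_two (hw : HasDerivAt w w' t) (c : ℂ) :
    HasDerivAt (fun s => exp (c * w s / 2)) (exp (c * w t / 2) * (c * w' / 2)) t :=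
  ((hw.ofReal_comp.const_mul c).div_const 2).cexp

lemma deriv_laxG_apply (hw : HasDerivAt w w' t) (hp : HasDerivAt p p' t) :
    Matrix.of (fun i j => deriv (fun s => laxG lam (w s) (p s) i j) t) =
      !![(p' : ℂ) / 4, w' * (lam * exp (-I * w t / 2) + exp (I * w t / 2) / lam) / 8;
        -(w' * (lam * exp (I * w t / 2) + exp (-I * w t / 2) / lam) / 8), -(p' : ℂ) / 4] := by
  have ha := hasDerivAt_cexp_mul_ofReal_div_two hw (-I)
  have hb := hasDerivAt_cexp_mul_ofReal_div_two hw I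
  ext i j
  fin_cases i <;> fin_cases j <;>
    simp only [laxG, of_apply, Fin.zero_eta, Fin.mk_one, Fin.isValue, cons_val_zero,
      cons_val_one, cons_val_fin_one]
  · exact (hp.ofReal_comp.div_const 4).deriv
  · refine ((((ha.const_mul lam).sub (hb.div_const lam)).const_mul I).div_const 4).deriv.trans ?_
    linear_combination
      (-(w' : ℂ) * (lam * exp (-I * w t / 2) + exp (I * w t / 2) / lam) / 8) * I_mul_I
  · refine ((((hb.const_mul lam).sub (ha.div_const lam)).const_mul I).div_const 4).deriv.trans ?_
    linear_combination
      ((w' : ℂ) * (lam * exp (I * w t / 2) + exp (-I * w t / 2) / lam) / 8) * I_mul_I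
  · exact (hp.ofReal_comp.neg.div_const 4).deriv

lemma deriv_laxF_apply (hw : HasDerivAt w w' t) (hp : HasDerivAt p p' t) :
    Matrix.of (fun i j => deriv (fun s => laxF lam (w s) (p s) i j) t) =
      !![-(p' : ℂ) / 4, I * w' * (lam * exp (-I * w t / 2) - exp (I * w t / 2) / lam) / 8;
        -(I * w' * (lam * exp (I * w t / 2) - exp (-I * w t / 2) / lam) / 8), (p' : ℂ) / 4] := by
  have ha := hasDerivAt_cexp_mul_ofReal_div_two hw (-I)
  have hb := hasDerivAt_cexp_mul_ofReal_div_two hw I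
  ext i j
  fin_cases i <;> fin_cases j <;>
    simp only [laxF, of_apply, Fin.zero_eta, Fin.mk_one, Fin.isValue, cons_val_zero,
      cons_val_one, cons_val_fin_one]
  · exact (hp.ofReal_comp.neg.div_const 4).deriv
  · exact (((ha.const_mul lam).add (hb.div_const lam)).neg.div_const 4).deriv.trans (by ring)
  · exact (((hb.const_mul lam).add (ha.div_const lam)).neg.div_const 4).deriv.trans (by ring)
  · exact (hp.ofReal_comp.div_const 4).deriv

end Derivatives

lemma exp_I_mul_half_sq_sub_exp_neg_I_mul_half_sq (w : ℂ) :
    exp (I * w / 2) * exp (I * w / 2) - exp (-I * w / 2) * exp (-I * w / 2) = 2 * I * sin w := by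
  rw [← exp_add, ← exp_add, show I * w / 2 + I * w / 2 = w * I by ring,
    show -I * w / 2 + -I * w / 2 = -w * I by ring]
  linear_combination (-I) * two_sin w + (exp (w * I) - exp (-w * I)) * I_mul_I

theorem laxCurvature_eq (v : ℝ → ℝ → ℝ) {lam : ℂ} (hlam : lam ≠ 0) (x t : ℝ)
    (hvt : DifferentiableAt ℝ (fun s => v x s) t)
    (hvtt : DifferentiableAt ℝ (fun s => deriv (fun s' => v x s') s) t)
    (hvx : DifferentiableAt ℝ (fun s => v s t) x)
    (hvxx : DifferentiableAt ℝ (fun s => deriv (fun s' => v s' t) s) x) :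
    Matrix.of (fun i j => deriv (fun s => laxG lam (v x s) (deriv (fun s' => v x s') s) i j) t)
      - Matrix.of (fun i j => deriv (fun s => laxF lam (v s t) (deriv (fun s' => v s' t) s) i j) x)
      + (laxG lam (v x t) (deriv (fun s => v x s) t) * laxF lam (v x t) (deriv (fun s => v s t) x)
        - laxF lam (v x t) (deriv (fun s => v s t) x) * laxG lam (v x t) (deriv (fun s => v x s) t))
      = (((deriv (fun s => deriv (fun s' => v x s') s) t
          + deriv (fun s => deriv (fun s' => v s' t) s) x - Real.sin (v x t) : ℝ) : ℂ) / 4) •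
        !![1, 0; 0, -1] := by
  rw [deriv_laxG_apply lam hvt.hasDerivAt hvtt.hasDerivAt,
    deriv_laxF_apply lam hvx.hasDerivAt hvxx.hasDerivAt]
  have hsin := exp_I_mul_half_sq_sub_exp_neg_I_mul_half_sq (v x t)
  have hinv := mul_inv_cancel₀ hlam
  ext i j
  fin_cases i <;> fin_cases j <;>
    simp only [laxG, laxF, Matrix.sub_apply, Matrix.add_apply, Matrix.smul_apply, mul_apply,
      Fin.sum_univ_two, of_apply, Fin.zero_eta, Fin.mk_one, Fin.isValue, cons_val_zero,
      cons_val_one, cons_val_fin_one, smul_eq_mul, ofReal_sub, ofReal_add, ofReal_sin]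
  -- `sin v` enters only through the terms `λ · λ⁻¹ · (b² - a²)`, hence `λ ≠ 0`.
  · linear_combination (I * lam * lam⁻¹ / 8) * hsin
      + (lam * lam⁻¹ * sin (v x t) / 4) * I_mul_I - (sin (v x t) / 4) * hinv
  · ring
  · ring
  · linear_combination (-I * lam * lam⁻¹ / 8) * hsin
      - (lam * lam⁻¹ * sin (v x t) / 4) * I_mul_I + (sin (v x t) / 4) * hinv

end EllipticSineGordon

open EllipticSineGordon

/-- Zero curvature representation of the elliptic sine-Gordon equation:
with ζ = [[0, e^{−iv/2}],[e^{iv/2}, 0]], G = (1/4)(iλζ + v_t j − (i/λ)JζJ),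
F = −(1/4)(λζ + v_x j + (1/λ)JζJ), the equation G_t − F_x + [G,F] = 0 holds for
all λ ≠ 0 iff v_tt + v_xx = sin v. -/
theorem stmt_14 (v : ℝ → ℝ → ℝ)
    (hv : ContDiff ℝ 2 (Function.uncurry v))
    (jm Jm : Matrix (Fin 2) (Fin 2) ℂ)
    (hjm : jm = !![1, 0; 0, -1]) (hJm : Jm = !![0, 1; 1, 0])
    (ζ : ℝ → ℝ → Matrix (Fin 2) (Fin 2) ℂ)
    (hζ : ∀ x t, ζ x t = !![0, Complex.exp (-Complex.I * (v x t : ℂ) / 2);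
      Complex.exp (Complex.I * (v x t : ℂ) / 2), 0])
    (G F : ℝ → ℝ → ℂ → Matrix (Fin 2) (Fin 2) ℂ)
    (hG : ∀ x t lam, G x t lam =
      (Complex.I * lam / 4) • ζ x t
      + (((deriv (fun s => v x s) t : ℝ) : ℂ) / 4) • jm
      - (Complex.I / (4 * lam)) • (Jm * ζ x t * Jm))
    (hF : ∀ x t lam, F x t lam =
      -((lam / 4) • ζ x t
        + (((deriv (fun s => v s t) x : ℝ) : ℂ) / 4) • jm
        + ((1 : ℂ) / (4 * lam)) • (Jm * ζ x t * Jm))) :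
    (∀ lam : ℂ, lam ≠ 0 → ∀ x t : ℝ,
      (Matrix.of fun i j => deriv (fun s => G x s lam i j) t)
        - (Matrix.of fun i j => deriv (fun s => F s t lam i j) x)
        + (G x t lam * F x t lam - F x t lam * G x t lam) = 0)
    ↔ (∀ x t : ℝ,
      deriv (fun s => deriv (fun s' => v x s') s) t
        + deriv (fun s => deriv (fun s' => v s' t) s) x
      = Real.sin (v x t)) := by
  subst hjm hJm
  obtain rfl : G = fun x t lam => laxG lam (v x t) (deriv (fun s => v x s) t) := by
    funext x t lam
    rw [hG, hζ, laxG_eq]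
  obtain rfl : F = fun x t lam => laxF lam (v x t) (deriv (fun s => v s t) x) := by
    funext x t lam
    rw [hF, hζ, laxF_eq]
  have hv_t (x : ℝ) : ContDiff ℝ 2 (fun s => v x s) := hv.comp (contDiff_prodMk_right x)
  have hv_x (t : ℝ) : ContDiff ℝ 2 (fun s => v s t) := hv.comp (contDiff_prodMk_left t)
  have hcurv {lam : ℂ} (hlam : lam ≠ 0) (x t : ℝ) := laxCurvature_eq v hlam x t
    ((hv_t x).differentiable two_ne_zero t) ((hv_t x).differentiable_deriv_two t)
    ((hv_x t).differentiable two_ne_zero x) ((hv_x t).differentiable_deriv_two x)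
  constructor
  · intro h x t
    have h00 := congrFun (congrFun ((hcurv one_ne_zero x t).symm.trans (h 1 one_ne_zero x t)) 0) 0
    simp only [Matrix.smul_apply, of_apply, cons_val_zero, smul_eq_mul, mul_one, Matrix.zero_apply,
      div_eq_zero_iff, OfNat.ofNat_ne_zero, or_false] at h00
    rw [← sub_eq_zero]
    exact_mod_cast h00
  · intro h lam hlam x t
    refine (hcurv hlam x t).trans ?_
    simp only [h x t, sub_self, ofReal_zero, zero_div, zero_smul]
end

section
/- Let ℛ(λ) = 𝒞(λ I_n − 𝒜)⁻¹ ℬ be a realization of a rational matrix function, and suppose 𝒳 = 𝒳* is an invertible solution of the Riccati equation i(𝒳𝒜 − 𝒜*𝒳) = 𝒞*𝒞 + 𝒳ℬℬ*𝒳. Then the matrices A = 𝒜 + iℬℬ*𝒳, S₀ = 𝒳⁻¹, Φ₁ = ℬ, Φ₂ = −i S₀ 𝒞* satisfy the identity A S₀ − S₀ A* = i (Φ₁ Φ₁* − Φ₂ Φ₂*) = i [Φ₁ Φ₂] j [Φ₁ Φ₂]*, where j = diag(I_{p₁}, −I_{p₂}). -/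
/-
Multiplying the Riccati equation by `S = X⁻¹` on both sides gives the Lyapunov-type identity
`i(𝒜S − S𝒜*) = S𝒞*𝒞S + ℬℬ*`. The feedback term `iℬℬ*X` of `A` adds `2iℬℬ*` to `𝒜S − S𝒜*`,
which flips the sign in front of `ℬℬ*`, and `Φ₂Φ₂* = S𝒞*𝒞S` because `S` is Hermitian.
-/

open Matrix

namespace Matrix

lemma fromCols_mul_signature_mul_conjTranspose {n m p R : Type*} [Fintype m] [Fintype p]
    [DecidableEq m] [DecidableEq p] [Ring R] [StarRing R] (B : Matrix n m R) (Φ : Matrix n p R) :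
    fromCols B Φ * (fromBlocks 1 0 0 (-1) : Matrix (m ⊕ p) (m ⊕ p) R) * (fromCols B Φ)ᴴ
      = B * Bᴴ - Φ * Φᴴ := by
  rw [fromCols_mul_fromBlocks, conjTranspose_fromCols_eq_fromRows_conjTranspose,
    fromCols_mul_fromRows]
  simp [sub_eq_add_neg]

lemma smul_neg_I_mul_conjTranspose {m p : Type*} [Fintype p] (M : Matrix m p ℂ) :
    ((-Complex.I) • M) * ((-Complex.I) • M)ᴴ = M * Mᴴ := by
  simp [Matrix.smul_mul, Matrix.mul_smul, smul_smul]

section Riccati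

variable {n : Type*} [Fintype n] [DecidableEq n]

lemma riccati_congr_inv {𝒜 X Q R : Matrix n n ℂ} (hXu : IsUnit X.det)
    (hric : Complex.I • (X * 𝒜 - 𝒜ᴴ * X) = Q + X * R * X) :
    Complex.I • (𝒜 * X⁻¹ - X⁻¹ * 𝒜ᴴ) = X⁻¹ * Q * X⁻¹ + R := by
  have h := congrArg (fun M => X⁻¹ * M * X⁻¹) hric
  simpa only [Matrix.mul_smul, Matrix.smul_mul, Matrix.mul_sub, Matrix.sub_mul, Matrix.mul_add,
    Matrix.add_mul, Matrix.mul_assoc, nonsing_inv_mul_cancel_left _ _ hXu,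
    mul_nonsing_inv _ hXu, Matrix.mul_one] using h

lemma feedback_mul_inv_sub_inv_mul_conjTranspose {𝒜 X R : Matrix n n ℂ} (hX : X.IsHermitian)
    (hR : R.IsHermitian) (hXu : IsUnit X.det) :
    (𝒜 + Complex.I • (R * X)) * X⁻¹ - X⁻¹ * (𝒜 + Complex.I • (R * X))ᴴ
      = 𝒜 * X⁻¹ - X⁻¹ * 𝒜ᴴ + (2 * Complex.I) • R := by
  simp only [conjTranspose_add, conjTranspose_smul, conjTranspose_mul, hX.eq, hR.eq,
    Complex.star_def, Complex.conj_I, Matrix.add_mul, Matrix.mul_add, Matrix.smul_mul,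
    Matrix.mul_smul, Matrix.mul_assoc, mul_nonsing_inv _ hXu, Matrix.mul_one,
    nonsing_inv_mul_cancel_left _ _ hXu]
  module

end Riccati

end Matrix

/-- From a Hermitian invertible solution 𝒳 of the Riccati equation
i(𝒳𝒜 − 𝒜*𝒳) = 𝒞*𝒞 + 𝒳ℬℬ*𝒳, the matrices A = 𝒜 + iℬℬ*𝒳, S₀ = 𝒳⁻¹,
Φ₁ = ℬ, Φ₂ = −i S₀ 𝒞* satisfy A S₀ − S₀ A* = i(Φ₁Φ₁* − Φ₂Φ₂*) = i [Φ₁ Φ₂] j [Φ₁ Φ₂]*. -/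
theorem stmt_17 {n p₁ p₂ : ℕ}
    (𝒜 X : Matrix (Fin n) (Fin n) ℂ)
    (ℬ : Matrix (Fin n) (Fin p₁) ℂ) (𝒞 : Matrix (Fin p₂) (Fin n) ℂ)
    (hX : X.IsHermitian) (hXu : IsUnit X.det)
    (hric : Complex.I • (X * 𝒜 - 𝒜ᴴ * X) = 𝒞ᴴ * 𝒞 + X * (ℬ * ℬᴴ) * X)
    (A : Matrix (Fin n) (Fin n) ℂ) (hA : A = 𝒜 + Complex.I • (ℬ * ℬᴴ * X))
    (Φ₂ : Matrix (Fin n) (Fin p₂) ℂ) (hΦ₂ : Φ₂ = (-Complex.I) • (X⁻¹ * 𝒞ᴴ)) :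
    A * X⁻¹ - X⁻¹ * Aᴴ = Complex.I • (ℬ * ℬᴴ - Φ₂ * Φ₂ᴴ)
    ∧ A * X⁻¹ - X⁻¹ * Aᴴ
      = Complex.I • (fromCols ℬ Φ₂ * (fromBlocks 1 0 0 (-1) : Matrix (Fin p₁ ⊕ Fin p₂) (Fin p₁ ⊕ Fin p₂) ℂ) * (fromCols ℬ Φ₂)ᴴ) := by
  have hΦ₂Φ₂ : Φ₂ * Φ₂ᴴ = X⁻¹ * (𝒞ᴴ * 𝒞) * X⁻¹ := by
    rw [hΦ₂, smul_neg_I_mul_conjTranspose, conjTranspose_mul, conjTranspose_nonsing_inv, hX.eq,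
      conjTranspose_conjTranspose]
    simp only [Matrix.mul_assoc]
  have hLyap : 𝒜 * X⁻¹ - X⁻¹ * 𝒜ᴴ = (-Complex.I) • (X⁻¹ * (𝒞ᴴ * 𝒞) * X⁻¹ + ℬ * ℬᴴ) := by
    rw [← riccati_congr_inv hXu hric, smul_smul]
    simp
  have hfirst : A * X⁻¹ - X⁻¹ * Aᴴ = Complex.I • (ℬ * ℬᴴ - Φ₂ * Φ₂ᴴ) := by
    rw [hA, feedback_mul_inv_sub_inv_mul_conjTranspose hX (isHermitian_mul_conjTranspose_self ℬ)
      hXu, hLyap, hΦ₂Φ₂]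
    module
  exact ⟨hfirst, by rw [hfirst, fromCols_mul_signature_mul_conjTranspose]⟩
end

section
/- Suppose 𝒳 > 0 solves the Riccati equation 𝒳𝒞*𝒞𝒳 + i(𝒜𝒳 − 𝒳𝒜*) − ℬℬ* = 0. Then the matrices A = 𝒳^{−1/2} 𝒜 𝒳^{1/2} + i 𝒳^{−1/2} ℬ ℬ* 𝒳^{−1/2}, Φ₁ = i 𝒳^{1/2} 𝒞*, Φ₂ = 𝒳^{−1/2} ℬ satisfy A − A* = i (Φ₁ Φ₁* + Φ₂ Φ₂*) = i [Φ₁ Φ₂][Φ₁ Φ₂]*. -/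
open Matrix
open scoped ComplexOrder
open scoped MatrixOrder

/-!
Write `X = S * S` with `S = X^{1/2}`, which is Hermitian and invertible. Sandwiching the Riccati
equation between two copies of `S⁻¹` gives
`S 𝒞* 𝒞 S = S⁻¹ ℬ ℬ* S⁻¹ - i (S⁻¹ 𝒜 S - S 𝒜* S⁻¹)`,
and the left side is `Φ₁ Φ₁*` while `S⁻¹ ℬ ℬ* S⁻¹ = Φ₂ Φ₂*`. Since
`A - A* = (S⁻¹ 𝒜 S - S 𝒜* S⁻¹) + 2 i S⁻¹ ℬ ℬ* S⁻¹`, the identity follows by collecting terms.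
-/

namespace Matrix

variable {m k : Type*}

theorem smul_mul_conjTranspose_smul {α : Type*} [CommRing α] [StarRing α] [Fintype k] {c : α}
    (hc : c * star c = 1) (M : Matrix m k α) : c • M * (c • M)ᴴ = M * Mᴴ := by
  rw [conjTranspose_smul, Matrix.smul_mul, Matrix.mul_smul, smul_smul, hc, one_smul]

variable [Fintype m] [DecidableEq m]

theorem PosDef.isUnit_det_sqrt {𝕜 : Type*} [RCLike 𝕜] {X : Matrix m m 𝕜} (hX : X.PosDef) :
    IsUnit (CFC.sqrt X).det :=
  (isUnit_iff_isUnit_det _).mp <| (CFC.isUnit_sqrt_iff X hX.posSemidef.nonneg).mpr hX.isUnit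

theorem mul_mul_eq_of_riccati {α : Type*} [CommRing α] (c : α) {S : Matrix m m α}
    (hS : IsUnit S.det) (A Q R P : Matrix m m α)
    (h : S * S * Q * (S * S) + c • (A * (S * S) - S * S * R) - P = 0) :
    S * Q * S = S⁻¹ * P * S⁻¹ - c • (S⁻¹ * A * S - S * R * S⁻¹) := by
  rw [sub_eq_zero] at h
  subst h
  simp only [Matrix.mul_add, Matrix.add_mul, Matrix.mul_sub, Matrix.sub_mul, Matrix.mul_smul,
    Matrix.smul_mul, ← Matrix.mul_assoc, mul_nonsing_inv_cancel_right (h := hS)]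
  simp only [Matrix.mul_assoc, nonsing_inv_mul_cancel_left (h := hS)]
  abel

variable [Fintype k]

open Complex in
theorem sub_conjTranspose_eq_of_riccati {S 𝒜 A : Matrix m m ℂ} {ℬ : Matrix m k ℂ}
    {𝒞 : Matrix k m ℂ} (hSH : Sᴴ = S) (hS : IsUnit S.det)
    (hric : S * S * (𝒞ᴴ * 𝒞) * (S * S) + I • (𝒜 * (S * S) - S * S * 𝒜ᴴ) - ℬ * ℬᴴ = 0)
    (hA : A = S⁻¹ * 𝒜 * S + I • (S⁻¹ * (ℬ * ℬᴴ) * S⁻¹)) :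
    A - Aᴴ = I • (I • (S * 𝒞ᴴ) * (I • (S * 𝒞ᴴ))ᴴ + S⁻¹ * ℬ * (S⁻¹ * ℬ)ᴴ) := by
  have hSinvH : (S⁻¹)ᴴ = S⁻¹ := by rw [conjTranspose_nonsing_inv, hSH]
  have hΦ₁ : I • (S * 𝒞ᴴ) * (I • (S * 𝒞ᴴ))ᴴ = S * (𝒞ᴴ * 𝒞) * S := by
    rw [smul_mul_conjTranspose_smul (by simp), conjTranspose_mul, conjTranspose_conjTranspose,
      hSH]
    simp only [Matrix.mul_assoc]
  have hΦ₂ : S⁻¹ * ℬ * (S⁻¹ * ℬ)ᴴ = S⁻¹ * (ℬ * ℬᴴ) * S⁻¹ := by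
    rw [conjTranspose_mul, hSinvH, Matrix.mul_assoc, Matrix.mul_assoc, Matrix.mul_assoc]
  have hAH : Aᴴ = S * 𝒜ᴴ * S⁻¹ - I • (S⁻¹ * (ℬ * ℬᴴ) * S⁻¹) := by
    simp only [hA, conjTranspose_add, conjTranspose_smul, conjTranspose_mul, hSH, hSinvH,
      conjTranspose_conjTranspose, star_def, conj_I, neg_smul, ← sub_eq_add_neg, Matrix.mul_assoc]
  rw [hAH, hΦ₁, hΦ₂, mul_mul_eq_of_riccati I hS _ _ _ _ hric, hA]
  simp only [smul_add, smul_sub, smul_smul, I_mul_I, neg_one_smul]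
  abel

end Matrix

/-- From a positive definite solution 𝒳 of the Riccati equation
𝒳𝒞*𝒞𝒳 + i(𝒜𝒳 − 𝒳𝒜*) − ℬℬ* = 0, the matrices
A = 𝒳^{−1/2}𝒜𝒳^{1/2} + i𝒳^{−1/2}ℬℬ*𝒳^{−1/2}, Φ₁ = i𝒳^{1/2}𝒞*, Φ₂ = 𝒳^{−1/2}ℬ
satisfy A − A* = i(Φ₁Φ₁* + Φ₂Φ₂*) = i [Φ₁ Φ₂][Φ₁ Φ₂]*. -/
theorem stmt_18 {n p : ℕ}
    (𝒜 X : Matrix (Fin n) (Fin n) ℂ)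
    (ℬ : Matrix (Fin n) (Fin p) ℂ) (𝒞 : Matrix (Fin p) (Fin n) ℂ)
    (hX : X.PosDef)
    (hric : X * (𝒞ᴴ * 𝒞) * X + Complex.I • (𝒜 * X - X * 𝒜ᴴ) - ℬ * ℬᴴ = 0)
    (Xh : Matrix (Fin n) (Fin n) ℂ) (hXh : Xh = CFC.sqrt X)
    (A : Matrix (Fin n) (Fin n) ℂ)
    (hA : A = Xh⁻¹ * 𝒜 * Xh + Complex.I • (Xh⁻¹ * (ℬ * ℬᴴ) * Xh⁻¹))
    (Φ₁ : Matrix (Fin n) (Fin p) ℂ) (hΦ₁ : Φ₁ = Complex.I • (Xh * 𝒞ᴴ))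
    (Φ₂ : Matrix (Fin n) (Fin p) ℂ) (hΦ₂ : Φ₂ = Xh⁻¹ * ℬ) :
    A - Aᴴ = Complex.I • (Φ₁ * Φ₁ᴴ + Φ₂ * Φ₂ᴴ)
    ∧ A - Aᴴ = Complex.I • (fromCols Φ₁ Φ₂ * (fromCols Φ₁ Φ₂)ᴴ) := by
  have hsq : Xh * Xh = X := hXh ▸ CFC.sqrt_mul_sqrt_self X hX.posSemidef.nonneg
  have hXhH : Xhᴴ = Xh := hXh ▸ (CFC.sqrt_nonneg X).isSelfAdjoint.star_eq
  rw [← hsq] at hric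
  have hsum : A - Aᴴ = Complex.I • (Φ₁ * Φ₁ᴴ + Φ₂ * Φ₂ᴴ) := by
    subst hΦ₁ hΦ₂
    exact sub_conjTranspose_eq_of_riccati hXhH (hXh ▸ hX.isUnit_det_sqrt) hric hA
  refine ⟨hsum, ?_⟩
  rwa [conjTranspose_fromCols_eq_fromRows_conjTranspose, fromCols_mul_fromRows]
end
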